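/- arXiv:1603.03734 — 5 statements merged into one kernel-verified Lean document; each statement's English description precedes it below -/
import Mathlib

section
/- Let n be a positive integer, A an (n+1)×(n+1) real matrix, b, l column vectors in ℝ^{n+1}, and c a row vector in ℝ^{n+1}. Let u, d₂ : ℝ → ℝ be functions and suppose x, p, q : ℝ → ℝ^{n+1} are differentiable and satisfy, for all t: x'(t) = A·x(t) + b·(u(t) + d₂(t)), p'(t) = A·p(t) + b·u(t) + l·(c·x(t) − c·p(t)), and q'(t) = (A − l·c)·q(t) + b·d₂(t). Then ε := x − p − q satisfies ε'(t) = (A − l·c)·ε(t) for all t. -/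
open Matrix

theorem vecMulVec_mulVec_eq_dotProduct_smul {ι R : Type*} [Fintype ι] [CommSemiring R]
    (l c v : ι → R) : vecMulVec l c *ᵥ v = (c ⬝ᵥ v) • l := by
  rw [vecMulVec_mulVec, op_smul_eq_smul]

/-- The output injection `l (c·x − c·p)` of the observer and the term `−l c q` of the filter
combine into `−l c (x − p − q)`, while the inputs `b u` and `b d₂` cancel. -/
theorem eso_filter_error_rhs {ι R : Type*} [Fintype ι] [CommRing R]
    (A : Matrix ι ι R) (b l c x p q : ι → R) (u d₂ : R) :
    (A *ᵥ x + (u + d₂) • b) - (A *ᵥ p + u • b + (c ⬝ᵥ x - c ⬝ᵥ p) • l)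
        - ((A - vecMulVec l c) *ᵥ q + d₂ • b)
      = (A - vecMulVec l c) *ᵥ (x - p - q) := by
  simp only [sub_mulVec, mulVec_sub, vecMulVec_mulVec_eq_dotProduct_smul, sub_smul, add_smul]
  abel

theorem eso_filter_error_dynamics_general (n : ℕ)
    (A : Matrix (Fin (n + 1)) (Fin (n + 1)) ℝ)
    (b l c : Fin (n + 1) → ℝ)
    (u d₂ : ℝ → ℝ) (x p q : ℝ → Fin (n + 1) → ℝ)
    (hx : ∀ t, HasDerivAt x (A.mulVec (x t) + (u t + d₂ t) • b) t)
    (hp : ∀ t, HasDerivAt p (A.mulVec (p t) + u t • b + (c ⬝ᵥ x t - c ⬝ᵥ p t) • l) t)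
    (hq : ∀ t, HasDerivAt q ((A - Matrix.vecMulVec l c).mulVec (q t) + d₂ t • b) t) :
    ∀ t, HasDerivAt (fun s => x s - p s - q s)
      ((A - Matrix.vecMulVec l c).mulVec (x t - p t - q t)) t := fun t =>
  (((hx t).sub (hp t)).sub (hq t)).congr_deriv (eso_filter_error_rhs ..)

/-- **Lemma 1 of the paper.** If the plant `x' = A x + b (u + d₂)`, the extended state
observer `p' = A p + b u + l (c·x − c·p)` and the disturbance filter
`q' = (A − l·c) q + b d₂` hold for all `t`, then the error `ε = x − p − q` satisfies the
homogeneous observer-error dynamics `ε' = (A − l·c) ε`. -/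
theorem eso_filter_error_dynamics (n : ℕ) (hn : 0 < n)
    (A : Matrix (Fin (n + 1)) (Fin (n + 1)) ℝ)
    (b l c : Fin (n + 1) → ℝ)
    (u d₂ : ℝ → ℝ) (x p q : ℝ → Fin (n + 1) → ℝ)
    (hx : ∀ t, HasDerivAt x (A.mulVec (x t) + (u t + d₂ t) • b) t)
    (hp : ∀ t, HasDerivAt p (A.mulVec (p t) + u t • b + (c ⬝ᵥ x t - c ⬝ᵥ p t) • l) t)
    (hq : ∀ t, HasDerivAt q ((A - Matrix.vecMulVec l c).mulVec (q t) + d₂ t • b) t) :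
    ∀ t, HasDerivAt (fun s => x s - p s - q s)
      ((A - Matrix.vecMulVec l c).mulVec (x t - p t - q t)) t :=
  eso_filter_error_dynamics_general n A b l c u d₂ x p q hx hp hq
end

section
/- Under the hypotheses of the Lyapunov computation — A_cᵀ·P + P·A_c = −2·Q with P symmetric positive definite, Γ symmetric positive definite, Q symmetric positive semidefinite, φ : ℝ → ℝ^{n×s} continuous, e, ψ differentiable with e' = A_c·e + φ·ψ and ψ' = −Γ⁻¹·φᵀ·P·e — the functions e and ψ are bounded on [0, ∞): there exists K > 0 such that ‖e(t)‖ ≤ K and ‖ψ(t)‖ ≤ K for all t ≥ 0. -/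
/-!
With `V(t) = e(t)ᵀ P e(t) + ψ(t)ᵀ Γ ψ(t)`, the Lyapunov equation and the update law make the
cross terms `eᵀ P φ ψ` cancel, so `V' = -2 eᵀ Q e ≤ 0` and `V` is antitone. Positive definite
forms dominate a multiple of the squared norm, so `‖e t‖²` and `‖ψ t‖²` are bounded by a
multiple of `V 0` for `t ≥ 0`. Since the update law carries `Γ⁻¹`, the parameter error is
weighted by `Γ` (not `Γ⁻¹`) in `V`.
-/

open Matrix

section Calculus

variable {𝕜 : Type*} [NontriviallyNormedField 𝕜] {ι κ : Type*} [Fintype ι]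
  {f g : 𝕜 → ι → 𝕜} {f' g' : ι → 𝕜} {t : 𝕜}

theorem HasDerivAt.dotProduct (hf : HasDerivAt f f' t) (hg : HasDerivAt g g' t) :
    HasDerivAt (fun t => f t ⬝ᵥ g t) (f' ⬝ᵥ g t + f t ⬝ᵥ g') t :=
  (HasDerivAt.fun_sum (u := Finset.univ) fun i _ =>
    (hasDerivAt_pi.1 hf i).mul (hasDerivAt_pi.1 hg i)).congr_deriv
    Finset.sum_add_distrib

theorem HasDerivAt.matrix_mulVec (M : Matrix κ ι 𝕜) (hf : HasDerivAt f f' t) :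
    HasDerivAt (fun t => M *ᵥ f t) (M *ᵥ f') t :=
  hasDerivAt_pi.2 fun i => by
    simpa [mulVec] using (hasDerivAt_const t (M i)).dotProduct hf

end Calculus

section QuadraticForm

variable {ι κ : Type*} [Fintype ι]

theorem Matrix.IsSymm.dotProduct_mulVec_comm {M : Matrix ι ι ℝ} (hM : M.IsSymm) (x y : ι → ℝ) :
    x ⬝ᵥ M *ᵥ y = y ⬝ᵥ M *ᵥ x := by
  rw [← dotProduct_transpose_mulVec, hM.eq]

theorem Matrix.IsSymm.hasDerivAt_dotProduct_mulVec {M : Matrix ι ι ℝ} (hM : M.IsSymm)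
    {f : ℝ → ι → ℝ} {f' : ι → ℝ} {t : ℝ} (hf : HasDerivAt f f' t) :
    HasDerivAt (fun t => f t ⬝ᵥ M *ᵥ f t) (2 * (f t ⬝ᵥ M *ᵥ f')) t :=
  (hf.dotProduct (hf.matrix_mulVec M)).congr_deriv <| by
    rw [hM.dotProduct_mulVec_comm f']
    ring

theorem Matrix.PosDef.exists_pos_mul_sq_norm_le {P : Matrix ι ι ℝ} (hP : P.PosDef) :
    ∃ c > 0, ∀ x : ι → ℝ, c * ‖x‖ ^ 2 ≤ x ⬝ᵥ P *ᵥ x := by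
  have hcont : Continuous fun x : ι → ℝ => x ⬝ᵥ P *ᵥ x :=
    continuous_id.dotProduct (continuous_const.matrix_mulVec continuous_id)
  have hpos (u : ι → ℝ) (hu : u ∈ Metric.sphere 0 1) : 0 < u ⬝ᵥ P *ᵥ u := by
    simpa using hP.dotProduct_mulVec_pos (ne_zero_of_mem_unit_sphere ⟨u, hu⟩)
  obtain ⟨c, hc, hmin⟩ :=
    (isCompact_sphere (0 : ι → ℝ) 1).exists_forall_le' hcont.continuousOn hpos
  refine ⟨c, hc, fun x => ?_⟩
  rcases eq_or_ne x 0 with rfl | hx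
  · simp
  have hr : ‖x‖ ≠ 0 := norm_ne_zero_iff.2 hx
  set u := ‖x‖⁻¹ • x
  have hu : u ∈ Metric.sphere (0 : ι → ℝ) 1 := by
    simp [u, norm_smul, hr]
  have hscale : x ⬝ᵥ P *ᵥ x = (u ⬝ᵥ P *ᵥ u) * ‖x‖ ^ 2 := by
    simp only [u, mulVec_smul, smul_dotProduct, dotProduct_smul, smul_eq_mul]
    field_simp
  rw [hscale]
  gcongr
  exact hmin u hu

variable [Fintype κ] [DecidableEq κ]

theorem lyapunov_cross_terms_cancel {Ac P Q : Matrix ι ι ℝ} (hP : P.IsSymm)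
    (hLyap : Acᵀ * P + P * Ac = (-2 : ℝ) • Q) {Γ : Matrix κ κ ℝ} (hΓ : IsUnit Γ)
    (F : Matrix ι κ ℝ) (a : ι → ℝ) (b : κ → ℝ) :
    a ⬝ᵥ P *ᵥ (Ac *ᵥ a + F *ᵥ b) + b ⬝ᵥ Γ *ᵥ -(Γ⁻¹ *ᵥ Fᵀ *ᵥ P *ᵥ a) = -(a ⬝ᵥ Q *ᵥ a) := by
  have hdrift : P *ᵥ a ⬝ᵥ Ac *ᵥ a + a ⬝ᵥ P *ᵥ Ac *ᵥ a = -2 * (a ⬝ᵥ Q *ᵥ a) := by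
    simpa only [add_mulVec, dotProduct_add, smul_mulVec, dotProduct_smul, smul_eq_mul,
      ← mulVec_mulVec, dotProduct_transpose_mulVec] using congrArg (fun M => a ⬝ᵥ M *ᵥ a) hLyap
  have hdrift_symm : P *ᵥ a ⬝ᵥ Ac *ᵥ a = a ⬝ᵥ P *ᵥ Ac *ᵥ a := by
    rw [dotProduct_comm, hP.dotProduct_mulVec_comm]
  have hcross : a ⬝ᵥ P *ᵥ F *ᵥ b = b ⬝ᵥ Fᵀ *ᵥ P *ᵥ a := by
    rw [dotProduct_transpose_mulVec, hP.dotProduct_mulVec_comm, dotProduct_comm]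
  have hΓinv (w : κ → ℝ) : Γ *ᵥ Γ⁻¹ *ᵥ w = w := by
    rw [mulVec_mulVec, mul_nonsing_inv _ ((isUnit_iff_isUnit_det Γ).1 hΓ), one_mulVec]
  rw [mulVec_add, dotProduct_add, mulVec_neg, hΓinv, dotProduct_neg, hcross]
  linarith

end QuadraticForm

theorem norm_le_sqrt_of_mul_sq_le {E : Type*} [SeminormedAddGroup E] {x : E} {c C : ℝ}
    (hc : 0 < c) (h : c * ‖x‖ ^ 2 ≤ C) : ‖x‖ ≤ √(C / c) := by
  simpa using Real.abs_le_sqrt ((le_div_iff₀' hc).2 h)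

theorem adaptive_observer_bounded_general (n s : ℕ)
    (Ac P Q : Matrix (Fin n) (Fin n) ℝ)
    (hPsymm : P.IsSymm) (hPpos : P.PosDef)
    (hQpos : Q.PosSemidef)
    (hLyap : Acᵀ * P + P * Ac = (-2 : ℝ) • Q)
    (Γ : Matrix (Fin s) (Fin s) ℝ) (hΓsymm : Γ.IsSymm) (hΓpos : Γ.PosDef)
    (φ : ℝ → Matrix (Fin n) (Fin s) ℝ)
    (e : ℝ → Fin n → ℝ) (ψ : ℝ → Fin s → ℝ)
    (he : ∀ t, HasDerivAt e (Ac.mulVec (e t) + (φ t).mulVec (ψ t)) t)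
    (hψ : ∀ t, HasDerivAt ψ (-(Γ⁻¹.mulVec ((φ t)ᵀ.mulVec (P.mulVec (e t))))) t) :
    ∃ K > (0 : ℝ), ∀ t : ℝ, 0 ≤ t → ‖e t‖ ≤ K ∧ ‖ψ t‖ ≤ K := by
  obtain ⟨cP, hcP, hP⟩ := hPpos.exists_pos_mul_sq_norm_le
  obtain ⟨cΓ, hcΓ, hΓ⟩ := hΓpos.exists_pos_mul_sq_norm_le
  set V : ℝ → ℝ := fun t => e t ⬝ᵥ P *ᵥ e t + ψ t ⬝ᵥ Γ *ᵥ ψ t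
  have hV : Antitone V := by
    refine antitone_of_hasDerivAt_nonpos (f' := fun t => -2 * (e t ⬝ᵥ Q *ᵥ e t)) (fun t => ?_)
      fun t => by simpa using hQpos.dotProduct_mulVec_nonneg (e t)
    refine ((hPsymm.hasDerivAt_dotProduct_mulVec (he t)).add
      (hΓsymm.hasDerivAt_dotProduct_mulVec (hψ t))).congr_deriv ?_
    rw [← mul_add, lyapunov_cross_terms_cancel hPsymm hLyap hΓpos.isUnit (φ t)]
    ring
  refine ⟨√(V 0 / cP) + √(V 0 / cΓ) + 1, by positivity, fun t ht => ?_⟩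
  have hVt : V t ≤ V 0 := hV ht
  have he_sq : 0 ≤ cP * ‖e t‖ ^ 2 := by positivity
  have hψ_sq : 0 ≤ cΓ * ‖ψ t‖ ^ 2 := by positivity
  constructor
  · have he_bound : cP * ‖e t‖ ^ 2 ≤ V 0 := by linarith [hP (e t), hΓ (ψ t)]
    linarith [norm_le_sqrt_of_mul_sq_le hcP he_bound, Real.sqrt_nonneg (V 0 / cΓ)]
  · have hψ_bound : cΓ * ‖ψ t‖ ^ 2 ≤ V 0 := by linarith [hP (e t), hΓ (ψ t)]
    linarith [norm_le_sqrt_of_mul_sq_le hcΓ hψ_bound, Real.sqrt_nonneg (V 0 / cP)]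

/-- **Boundedness from the Lyapunov computation.** Under the Lyapunov equation
`A_cᵀ·P + P·A_c = −2·Q` with `P` symmetric positive definite, `Γ` symmetric positive
definite, `Q` symmetric positive semidefinite, the error dynamics `e' = A_c·e + φ·ψ`
and the update law `ψ' = −Γ⁻¹·φᵀ·P·e`, the functions `e` and `ψ` are bounded on
`[0, ∞)`. -/
theorem adaptive_observer_bounded (n s : ℕ) (hn : 0 < n) (hs : 0 < s)
    (Ac P Q : Matrix (Fin n) (Fin n) ℝ)
    (hPsymm : P.IsSymm) (hPpos : P.PosDef)
    (hQsymm : Q.IsSymm) (hQpos : Q.PosSemidef)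
    (hLyap : Acᵀ * P + P * Ac = (-2 : ℝ) • Q)
    (Γ : Matrix (Fin s) (Fin s) ℝ) (hΓsymm : Γ.IsSymm) (hΓpos : Γ.PosDef)
    (φ : ℝ → Matrix (Fin n) (Fin s) ℝ) (hφ : Continuous φ)
    (e : ℝ → Fin n → ℝ) (ψ : ℝ → Fin s → ℝ)
    (he : ∀ t, HasDerivAt e (Ac.mulVec (e t) + (φ t).mulVec (ψ t)) t)
    (hψ : ∀ t, HasDerivAt ψ (-(Γ⁻¹.mulVec ((φ t)ᵀ.mulVec (P.mulVec (e t))))) t) :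
    ∃ K > (0 : ℝ), ∀ t : ℝ, 0 ≤ t → ‖e t‖ ≤ K ∧ ‖ψ t‖ ≤ K :=
  adaptive_observer_bounded_general n s Ac P Q hPsymm hPpos hQpos hLyap Γ hΓsymm hΓpos φ e ψ he hψ
end

section
/- Let s and m be positive integers, let Q₁ be a symmetric positive definite s×s real matrix and Q₂ a symmetric positive definite m×m real matrix, and let B₁ be an arbitrary s×s real matrix and B₂, B₃ arbitrary s×m real matrices. Then there exist γ₁ > 0 and γ₂ > 0 such that the symmetric (2s+m)×(2s+m) block matrix Q_c = [[Q₁, B₁, B₂], [B₁ᵀ, γ₁·Q₁, γ₁·B₃], [B₂ᵀ, γ₁·B₃ᵀ, γ₂·Q₂]] is positive definite. -/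
/-!
A Hermitian block matrix `[[A, B], [Bᴴ, D]]` with `A` positive definite is positive definite
exactly when its Schur complement `D - Bᴴ A⁻¹ B` is. Replacing `D` by `t • D` with `D` positive
definite, the Schur complement `t • D - Bᴴ A⁻¹ B` is positive definite for large `t`, because
`D ≥ δ` for some `δ > 0` and `Bᴴ A⁻¹ B ≤ c` in the Loewner order. Applying this first to
`A = Q₁` fixes `γ₁`, and then to the resulting positive definite `2s × 2s` block fixes `γ₂`.
-/

open Matrix
open scoped ComplexOrder MatrixOrder

variable {𝕜 : Type*} [RCLike 𝕜] {m n : Type*} [Fintype m] [Fintype n] [DecidableEq m]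
  [DecidableEq n]

omit [Fintype n] [DecidableEq n] in
theorem Matrix.PosDef.trans_le {A B : Matrix n n 𝕜} (hA : A.PosDef) (hAB : A ≤ B) :
    B.PosDef := by
  simpa using hA.add_posSemidef hAB

theorem Matrix.PosDef.exists_pos_algebraMap_le {Q : Matrix n n 𝕜} (hQ : Q.PosDef) :
    ∃ δ > 0, algebraMap ℝ (Matrix n n 𝕜) δ ≤ Q := by
  cases subsingleton_or_nontrivial (Matrix n n 𝕜)
  · exact ⟨1, one_pos, (Subsingleton.elim _ _).le⟩
  · exact (CFC.exists_pos_algebraMap_le_iff hQ.isStrictlyPositive.isSelfAdjoint).2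
      fun _ hx ↦ hQ.isStrictlyPositive.spectrum_pos hx

theorem Matrix.IsHermitian.exists_le_algebraMap {K : Matrix n n 𝕜} (hK : K.IsHermitian) :
    ∃ c : ℝ, K ≤ algebraMap ℝ (Matrix n n 𝕜) c := by
  have hcompact : IsCompact (spectrum ℝ K) := isCompact_iff_compactSpace.mpr inferInstance
  obtain ⟨c, hc⟩ := hcompact.bddAbove
  exact ⟨c, le_algebraMap_of_spectrum_le hc hK.isSelfAdjoint⟩

theorem Matrix.PosDef.exists_smul_sub_posDef {Q K : Matrix n n 𝕜} (hQ : Q.PosDef)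
    (hK : K.IsHermitian) : ∃ t > (0 : ℝ), (t • Q - K).PosDef := by
  obtain ⟨δ, hδ, hδQ⟩ := hQ.exists_pos_algebraMap_le
  obtain ⟨c, hKc⟩ := hK.exists_le_algebraMap
  set t := (|c| + 1) / δ
  have ht : 0 < t := by positivity
  refine ⟨t, ht, PosDef.trans_le (A := algebraMap ℝ _ (t * δ - c)) ?_ ?_⟩
  · have htδ : t * δ = |c| + 1 := div_mul_cancel₀ _ hδ.ne'
    exact (isStrictlyPositive_algebraMap (by linarith [le_abs_self c])).posDef
  · rw [map_sub, map_mul, ← Algebra.smul_def]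
    exact sub_le_sub (smul_le_smul_of_nonneg_left hδQ ht.le) hKc

/-- Positive definiteness is positive semidefiniteness plus invertibility, and the determinant
of the block matrix is `det A` times that of the Schur complement. -/
theorem Matrix.PosDef.posDef_fromBlocks₁₁_iff {A : Matrix m m 𝕜} (hA : A.PosDef)
    (B : Matrix m n 𝕜) (D : Matrix n n 𝕜) :
    (fromBlocks A B Bᴴ D).PosDef ↔ (D - Bᴴ * A⁻¹ * B).PosDef := by
  have := hA.isUnit.invertible
  have hdet : (fromBlocks A B Bᴴ D).det ≠ 0 ↔ (D - Bᴴ * A⁻¹ * B).det ≠ 0 := by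
    rw [det_fromBlocks₁₁, invOf_eq_nonsing_inv, mul_ne_zero_iff, and_iff_right hA.det_pos.ne']
  by_cases hS : (D - Bᴴ * A⁻¹ * B).PosSemidef
  · rw [hS.posDef_iff_det_ne_zero, ((hA.fromBlocks₁₁ B D).2 hS).posDef_iff_det_ne_zero, hdet]
  · exact iff_of_false (fun h ↦ hS ((hA.fromBlocks₁₁ B D).1 h.posSemidef))
      (fun h ↦ hS h.posSemidef)

theorem Matrix.PosDef.exists_fromBlocks_smul_posDef {A : Matrix m m 𝕜} {D : Matrix n n 𝕜}
    (hA : A.PosDef) (hD : D.PosDef) (B : Matrix m n 𝕜) :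
    ∃ t > (0 : ℝ), (fromBlocks A B Bᴴ (t • D)).PosDef := by
  have hK : (Bᴴ * A⁻¹ * B).IsHermitian := isHermitian_conjTranspose_mul_mul B hA.inv.1
  obtain ⟨t, ht, hS⟩ := hD.exists_smul_sub_posDef hK
  exact ⟨t, ht, (hA.posDef_fromBlocks₁₁_iff B _).2 hS⟩

theorem blockMatrix_posDef_of_large_gamma_general (s m : ℕ)
    (Q₁ : Matrix (Fin s) (Fin s) ℝ) (hQ₁ : Q₁.PosDef)
    (Q₂ : Matrix (Fin m) (Fin m) ℝ) (hQ₂ : Q₂.PosDef)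
    (B₁ : Matrix (Fin s) (Fin s) ℝ) (B₂ B₃ : Matrix (Fin s) (Fin m) ℝ) :
    ∃ γ₁ > (0 : ℝ), ∃ γ₂ > (0 : ℝ),
      (Matrix.fromBlocks
        (Matrix.fromBlocks Q₁ B₁ B₁ᵀ (γ₁ • Q₁))
        (Matrix.fromRows B₂ (γ₁ • B₃))
        (Matrix.fromCols B₂ᵀ (γ₁ • B₃ᵀ))
        (γ₂ • Q₂)).PosDef := by
  obtain ⟨γ₁, hγ₁, hA⟩ := hQ₁.exists_fromBlocks_smul_posDef hQ₁ B₁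
  obtain ⟨γ₂, hγ₂, hQc⟩ := hA.exists_fromBlocks_smul_posDef hQ₂ (fromRows B₂ (γ₁ • B₃))
  refine ⟨γ₁, hγ₁, γ₂, hγ₂, ?_⟩
  simpa only [conjTranspose_eq_transpose_of_trivial, transpose_fromRows, transpose_smul]
    using hQc

/-- **Positive definiteness of the paper's block matrix `Q_c`.** For symmetric positive
definite `Q₁`, `Q₂` and arbitrary blocks `B₁`, `B₂`, `B₃`, there exist `γ₁, γ₂ > 0`
such that the symmetric block matrix
`[[Q₁, B₁, B₂], [B₁ᵀ, γ₁·Q₁, γ₁·B₃], [B₂ᵀ, γ₁·B₃ᵀ, γ₂·Q₂]]` is positive definite. -/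
theorem blockMatrix_posDef_of_large_gamma (s m : ℕ) (hs : 0 < s) (hm : 0 < m)
    (Q₁ : Matrix (Fin s) (Fin s) ℝ) (hQ₁symm : Q₁.IsSymm) (hQ₁ : Q₁.PosDef)
    (Q₂ : Matrix (Fin m) (Fin m) ℝ) (hQ₂symm : Q₂.IsSymm) (hQ₂ : Q₂.PosDef)
    (B₁ : Matrix (Fin s) (Fin s) ℝ) (B₂ B₃ : Matrix (Fin s) (Fin m) ℝ) :
    ∃ γ₁ > (0 : ℝ), ∃ γ₂ > (0 : ℝ),
      (Matrix.fromBlocks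
        (Matrix.fromBlocks Q₁ B₁ B₁ᵀ (γ₁ • Q₁))
        (Matrix.fromRows B₂ (γ₁ • B₃))
        (Matrix.fromCols B₂ᵀ (γ₁ • B₃ᵀ))
        (γ₂ • Q₂)).PosDef :=
  blockMatrix_posDef_of_large_gamma_general s m Q₁ hQ₁ Q₂ hQ₂ B₁ B₂ B₃
end

section
/- Let η : ℝ → ℝ^s be a continuous, bounded, persistently excited function, and let e : ℝ → ℝ^s be continuous with e(t) → 0 as t → ∞. Then ξ := η − e is eventually persistently excited: there exist T₁ ≥ 0, T₀ > 0 and α > 0 such that for every t₀ ≥ T₁, the matrix ∫_{t₀}^{t₀+T₀} ξ(τ)·ξ(τ)ᵀ dτ − α·I is positive semidefinite. -/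
open Matrix MeasureTheory

/-- A (locally integrable) function `w : ℝ → ℝ^s` is persistently excited if there are
`T₀ > 0` and `α > 0` such that for every `t₀ ≥ 0` the matrix
`∫_{t₀}^{t₀+T₀} w(τ)·w(τ)ᵀ dτ − α·I` is positive semidefinite. -/
def PersistentlyExcited {s : ℕ} (w : ℝ → Fin s → ℝ) : Prop :=
  ∃ T₀ > (0 : ℝ), ∃ α > (0 : ℝ), ∀ t₀ : ℝ, 0 ≤ t₀ →
    ((Matrix.of fun i j => ∫ τ in t₀..(t₀ + T₀), w τ i * w τ j) -
      α • (1 : Matrix (Fin s) (Fin s) ℝ)).PosSemidef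

/-! The Gram matrix `∫ w wᵀ` has quadratic form `x ↦ ∫ (w · x)²`, so `∫ w wᵀ - α I ⪰ 0` says
`∫ (w · x)² ≥ α |x|²` for every `x`. Pointwise, `(a - b)² ≥ a²/2 - b²`; hence once `|e|² ≤ α/(4T₀)`
on a window of length `T₀`, `∫ ((η - e) · x)² ≥ α|x|²/2 - T₀ · α/(4T₀) · |x|² = (α/4)|x|²`. -/

namespace Matrix

variable {n : Type*}

noncomputable def intervalGram (w : ℝ → n → ℝ) (a b : ℝ) : Matrix n n ℝ :=
  of fun i j => ∫ τ in a..b, w τ i * w τ j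

lemma sq_dotProduct_le [Fintype n] (v x : n → ℝ) : (v ⬝ᵥ x) ^ 2 ≤ (v ⬝ᵥ v) * (x ⬝ᵥ x) := by
  simp only [dotProduct, ← sq]
  exact Finset.sum_mul_sq_le_sq_mul_sq _ v x

lemma isHermitian_intervalGram (w : ℝ → n → ℝ) (a b : ℝ) : (intervalGram w a b).IsHermitian := by
  ext i j
  simp only [intervalGram, conjTranspose_apply, of_apply, star_trivial, mul_comm]

lemma dotProduct_intervalGram_mulVec [Fintype n] {w : ℝ → n → ℝ} (hw : Continuous w)
    (a b : ℝ) (x : n → ℝ) : x ⬝ᵥ (intervalGram w a b *ᵥ x) = ∫ τ in a..b, (w τ ⬝ᵥ x) ^ 2 := by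
  have hsq : ∀ τ, (w τ ⬝ᵥ x) ^ 2 = ∑ i, ∑ j, x i * (w τ i * w τ j * x j) := fun τ => by
    simp only [dotProduct, sq, Finset.sum_mul_sum]
    exact Finset.sum_congr rfl fun i _ => Finset.sum_congr rfl fun j _ => by ring
  simp only [hsq]
  simp only [intervalGram, dotProduct, mulVec, of_apply, Finset.mul_sum]
  rw [intervalIntegral.integral_finsetSum fun i _ =>
    Continuous.intervalIntegrable (by fun_prop) a b]
  refine Finset.sum_congr rfl fun i _ => ?_
  rw [intervalIntegral.integral_finsetSum fun j _ =>
    Continuous.intervalIntegrable (by fun_prop) a b]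
  simp only [intervalIntegral.integral_const_mul, intervalIntegral.integral_mul_const]

lemma posSemidef_intervalGram_sub_smul_one_iff [Fintype n] [DecidableEq n]
    {w : ℝ → n → ℝ} (hw : Continuous w) (a b c : ℝ) :
    (intervalGram w a b - c • (1 : Matrix n n ℝ)).PosSemidef ↔
      ∀ x : n → ℝ, c * (x ⬝ᵥ x) ≤ ∫ τ in a..b, (w τ ⬝ᵥ x) ^ 2 := by
  have hherm := (isHermitian_intervalGram w a b).sub (isHermitian_one.smul (IsSelfAdjoint.all c))
  simp only [posSemidef_iff_dotProduct_mulVec, hherm, true_and, star_trivial, sub_mulVec,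
    dotProduct_sub, smul_mulVec, one_mulVec, dotProduct_smul, smul_eq_mul, sub_nonneg,
    dotProduct_intervalGram_mulVec hw]

variable [Fintype n] {a b : ℝ}

lemma intervalIntegral_sq_dotProduct_le {e : ℝ → n → ℝ} (he : Continuous e) (hab : a ≤ b)
    {C : ℝ} (hC : ∀ τ ∈ Set.Icc a b, e τ ⬝ᵥ e τ ≤ C) (x : n → ℝ) :
    ∫ τ in a..b, (e τ ⬝ᵥ x) ^ 2 ≤ (b - a) * (C * (x ⬝ᵥ x)) := by
  have hx : 0 ≤ x ⬝ᵥ x := by simpa using dotProduct_star_self_nonneg x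
  calc ∫ τ in a..b, (e τ ⬝ᵥ x) ^ 2 ≤ ∫ _ in a..b, C * (x ⬝ᵥ x) :=
        intervalIntegral.integral_mono_on hab
          (Continuous.intervalIntegrable (by fun_prop) a b) intervalIntegrable_const fun τ hτ =>
            (sq_dotProduct_le _ _).trans (mul_le_mul_of_nonneg_right (hC τ hτ) hx)
    _ = (b - a) * (C * (x ⬝ᵥ x)) := by rw [intervalIntegral.integral_const, smul_eq_mul]

lemma half_intervalIntegral_sq_dotProduct_sub_le {η e : ℝ → n → ℝ} (hη : Continuous η)
    (he : Continuous e) (hab : a ≤ b) (x : n → ℝ) :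
    (∫ τ in a..b, (η τ ⬝ᵥ x) ^ 2) / 2 - ∫ τ in a..b, (e τ ⬝ᵥ x) ^ 2 ≤
      ∫ τ in a..b, ((η τ - e τ) ⬝ᵥ x) ^ 2 := by
  rw [← intervalIntegral.integral_div, ← intervalIntegral.integral_sub
    (Continuous.intervalIntegrable (by fun_prop) a b)
    (Continuous.intervalIntegrable (by fun_prop) a b)]
  refine intervalIntegral.integral_mono_on hab (Continuous.intervalIntegrable (by fun_prop) a b)
    (Continuous.intervalIntegrable (by fun_prop) a b) fun τ _ => ?_
  rw [sub_dotProduct]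
  nlinarith [sq_nonneg (η τ ⬝ᵥ x - 2 * (e τ ⬝ᵥ x))]

end Matrix

theorem persistentlyExcited_sub_vanishing_general (s : ℕ)
    (η e : ℝ → Fin s → ℝ)
    (hηcont : Continuous η)
    (hPE : PersistentlyExcited η)
    (hecont : Continuous e) (he0 : Filter.Tendsto e Filter.atTop (nhds 0)) :
    ∃ T₁ : ℝ, 0 ≤ T₁ ∧ ∃ T₀ > (0 : ℝ), ∃ α > (0 : ℝ), ∀ t₀ : ℝ, T₁ ≤ t₀ →
      ((Matrix.of fun i j =>
          ∫ τ in t₀..(t₀ + T₀), (η τ - e τ) i * (η τ - e τ) j) -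
        α • (1 : Matrix (Fin s) (Fin s) ℝ)).PosSemidef := by
  obtain ⟨T₀, hT₀, α, hα, hpe⟩ := hPE
  have he_small : ∀ᶠ t in Filter.atTop, e t ⬝ᵥ e t < α / (4 * T₀) := by
    refine Filter.Tendsto.eventually_lt_const (by positivity) ?_
    simpa [Function.comp_def] using ((continuous_id.dotProduct continuous_id).tendsto 0).comp he0
  obtain ⟨N, hN⟩ := Filter.eventually_atTop.1 he_small
  refine ⟨max N 0, le_max_right _ _, T₀, hT₀, α / 4, by positivity, fun t₀ ht₀ => ?_⟩
  refine (posSemidef_intervalGram_sub_smul_one_iff (w := fun τ => η τ - e τ)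
    (hηcont.sub hecont) _ _ _).2 fun x => ?_
  have hη := (posSemidef_intervalGram_sub_smul_one_iff hηcont _ _ _).1
    (hpe t₀ ((le_max_right _ _).trans ht₀)) x
  have hwindow_le : t₀ ≤ t₀ + T₀ := by linarith
  have he := intervalIntegral_sq_dotProduct_le hecont hwindow_le
    (fun τ hτ => (hN τ ((le_max_left _ _).trans (ht₀.trans hτ.1))).le) x
  have hξ := half_intervalIntegral_sq_dotProduct_sub_le hηcont hecont hwindow_le x
  have hwindow : (t₀ + T₀ - t₀) * (α / (4 * T₀) * (x ⬝ᵥ x)) = α / 4 * (x ⬝ᵥ x) := by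
    field_simp
    ring
  linarith

/-- **Persistent excitation is inherited by `ξ := η − e` when `e → 0`.** If `η` is a
continuous, bounded, persistently excited function and `e` is continuous with
`e(t) → 0`, then `ξ = η − e` is eventually persistently excited. -/
theorem persistentlyExcited_sub_vanishing (s : ℕ) (hs : 0 < s)
    (η e : ℝ → Fin s → ℝ)
    (hηcont : Continuous η) (hηbdd : ∃ B : ℝ, ∀ t : ℝ, ‖η t‖ ≤ B)
    (hPE : PersistentlyExcited η)
    (hecont : Continuous e) (he0 : Filter.Tendsto e Filter.atTop (nhds 0)) :
    ∃ T₁ : ℝ, 0 ≤ T₁ ∧ ∃ T₀ > (0 : ℝ), ∃ α > (0 : ℝ), ∀ t₀ : ℝ, T₁ ≤ t₀ →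
      ((Matrix.of fun i j =>
          ∫ τ in t₀..(t₀ + T₀), (η τ - e τ) i * (η τ - e τ) j) -
        α • (1 : Matrix (Fin s) (Fin s) ℝ)).PosSemidef :=
  persistentlyExcited_sub_vanishing_general s η e hηcont hPE hecont he0
end

section
/- Let n ≥ 1 and b_n ≠ 0 a real number. Let Ā be the n×n real shift matrix (Ā entries: Ā_{i,i+1} = 1 for 1 ≤ i ≤ n−1, all other entries 0), b̄ = b_n·e_n ∈ ℝⁿ, and let A be the (n+1)×(n+1) real shift matrix (A_{i,i+1} = 1 for 1 ≤ i ≤ n, all other entries 0), b = b_n·e_n ∈ ℝ^{n+1}, c = e₁ᵀ the first-coordinate row vector. Let k̄ ∈ ℝⁿ and set k := (k̄, 1) ∈ ℝ^{n+1}, and let l ∈ ℝ^{n+1}. Assume Ā − b̄·k̄ᵀ and A − l·c are both Hurwitz. Suppose x̄ : ℝ → ℝⁿ and v : ℝ → ℝ^{n+1} are differentiable and satisfy, with u(t) := −kᵀ·v(t): x̄'(t) = Ā·x̄(t) + b̄·u(t) and v'(t) = A·v(t) + b·u(t) + l·(x̄₁(t) − v₁(t)) for all t ≥ 0. Then x̄(t)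 → 0 and v(t) → 0 as t → ∞. -/
/-!
With `e := (x̄, 0) - v` the observer error relative to the extended plant state (the total
disturbance is zero here), the closed loop becomes the cascade `e' = (A - l c) e`,
`x̄' = (Ā - b̄ k̄ᵀ) x̄ + b̄ kᵀ e`. Its system matrix is block upper triangular with Hurwitz diagonal
blocks, hence Hurwitz. A solution of `z' = M z` is `exp (t M) z(0)`, and for Hurwitz `M` this tends
to zero: over `ℂ`, split `z(0)` into generalized eigenvectors of `M`, on each of which
`exp (t M)` acts as `e^{tμ}` times a polynomial in `t`.
-/

open Matrix

/-- A real square matrix is Hurwitz if every eigenvalue of the matrix, regarded as a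
matrix over `ℂ`, has strictly negative real part. -/
def IsHurwitz {n : Type*} [Fintype n] [DecidableEq n] (M : Matrix n n ℝ) : Prop :=
  ∀ μ ∈ spectrum ℂ (M.map (algebraMap ℝ ℂ)), μ.re < 0

/-- The `n × n` shift matrix: ones on the superdiagonal, zeros elsewhere. -/
def shiftMatrix (n : ℕ) : Matrix (Fin n) (Fin n) ℝ :=
  Matrix.of fun i j => if (i : ℕ) + 1 = (j : ℕ) then 1 else 0

open NormedSpace Filter Topology

attribute [local instance]
  Matrix.linftyOpNormedAddCommGroup Matrix.linftyOpNormedRing Matrix.linftyOpNormedAlgebra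

theorem Complex.tendsto_exp_mul_mul_pow_atTop {μ : ℂ} (hμ : μ.re < 0) (n : ℕ) :
    Tendsto (fun t : ℝ => Complex.exp (t * μ) * (t : ℂ) ^ n) atTop (𝓝 0) := by
  rw [tendsto_zero_iff_norm_tendsto_zero]
  refine ((isLittleO_pow_exp_pos_mul_atTop n (neg_pos.mpr hμ)).tendsto_div_nhds_zero).congr' ?_
  filter_upwards [eventually_ge_atTop 0] with t ht
  rw [norm_mul, Complex.norm_exp, norm_pow, Complex.norm_real, Real.norm_of_nonneg ht,
    div_eq_mul_inv, ← Real.exp_neg]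
  simp [mul_comm]

namespace Matrix

variable {ι : Type*} [Fintype ι] [DecidableEq ι]

section MulVecCLM

variable (𝕜 : Type*) [NontriviallyNormedField 𝕜] [CompleteSpace 𝕜]

noncomputable def mulVecCLM : Matrix ι ι 𝕜 →L[𝕜] (ι → 𝕜) →L[𝕜] ι → 𝕜 :=
  LinearMap.toContinuousLinearMap
    (LinearMap.toContinuousLinearMap.toLinearMap ∘ₗ Matrix.toLin'.toLinearMap)

variable {𝕜} in
@[simp]
theorem mulVecCLM_apply (M : Matrix ι ι 𝕜) (w : ι → 𝕜) : mulVecCLM 𝕜 M w = M *ᵥ w :=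
  rfl

end MulVecCLM

theorem eq_exp_smul_mulVec_of_hasDerivAt {M : Matrix ι ι ℝ} {x : ℝ → ι → ℝ}
    (hx : ∀ t, 0 ≤ t → HasDerivAt x (M *ᵥ x t) t) {t : ℝ} (ht : 0 ≤ t) :
    x t = exp (t • M) *ᵥ x 0 := by
  set y : ℝ → ι → ℝ := fun s => exp (s • -M) *ᵥ x s
  have hy : ∀ s, 0 ≤ s → HasDerivAt y 0 s := fun s hs => by
    have hE : HasDerivAt (fun s => mulVecCLM ℝ (exp (s • -M)))
        (mulVecCLM ℝ (exp (s • -M) * -M)) s :=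
      (mulVecCLM ℝ).hasFDerivAt.comp_hasDerivAt s (hasDerivAt_exp_smul_const (-M) s)
    have h0 :
        mulVecCLM ℝ (exp (s • -M) * -M) (x s) + mulVecCLM ℝ (exp (s • -M)) (M *ᵥ x s) = 0 := by
      simp only [mulVecCLM_apply, ← mulVec_mulVec, neg_mulVec, mulVec_neg, neg_add_cancel]
    exact h0 ▸ hE.clm_apply (hx s hs)
  have hconst : y t = y 0 :=
    constant_of_has_deriv_right_zero (fun s hs => (hy s hs.1).continuousAt.continuousWithinAt)
      (fun s hs => (hy s hs.1).hasDerivWithinAt) t (Set.right_mem_Icc.mpr ht)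
  have hinv : exp (t • M) * exp (t • -M) = 1 := by
    rw [← exp_add_of_commute _ _ ((Commute.refl M).neg_right.smul_left t |>.smul_right t)]
    simp
  calc x t = (exp (t • M) * exp (t • -M)) *ᵥ x t := by rw [hinv, one_mulVec]
    _ = exp (t • M) *ᵥ x 0 := by
      rw [← mulVec_mulVec]
      simpa [y] using congrArg (exp (t • M) *ᵥ ·) hconst

theorem exp_smul_mulVec_eq_sum {N : Matrix ι ι ℂ} {μ : ℂ} {w : ι → ℂ} {k : ℕ}
    (hw : (N - μ • 1) ^ k *ᵥ w = 0) (s : ℂ) :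
    exp (s • N) *ᵥ w = ∑ n ∈ Finset.range k,
      (Complex.exp (s * μ) * s ^ n) • ((n.factorial : ℂ)⁻¹ • ((N - μ • 1) ^ n *ᵥ w)) := by
  set B := N - μ • 1
  have hsplit : s • N = (s * μ) • 1 + s • B := by simp [B, smul_sub, smul_smul]
  have hexp_scalar : exp ((s * μ) • (1 : Matrix ι ι ℂ)) = Complex.exp (s * μ) • 1 := by
    rw [← Algebra.algebraMap_eq_smul_one]
    refine (algebraMap_exp_comm (𝔸 := Matrix ι ι ℂ) (s * μ)).symm.trans ?_
    rw [← Complex.exp_eq_exp_ℂ, Algebra.algebraMap_eq_smul_one]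
  have hvanish : ∀ n ∉ Finset.range k, ((n.factorial : ℂ)⁻¹ • (s • B) ^ n) *ᵥ w = 0 := by
    intro n hn
    obtain ⟨j, rfl⟩ := Nat.exists_eq_add_of_le' (not_lt.mp (Finset.mem_range.not.mp hn))
    rw [smul_pow, smul_mulVec, smul_mulVec, pow_add B, ← mulVec_mulVec, hw, mulVec_zero,
      smul_zero, smul_zero]
  have hexp_nil : exp (s • B) *ᵥ w =
      ∑ n ∈ Finset.range k, (s ^ n * (n.factorial : ℂ)⁻¹) • (B ^ n *ᵥ w) := by
    have hsum := (expSeries_summable' (𝕂 := ℂ) (s • B)).map_tsum (mulVec.addMonoidHomLeft w)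
      (continuous_id.matrix_mulVec continuous_const)
    rw [exp_eq_tsum ℂ]
    refine hsum.trans ((tsum_eq_sum hvanish).trans (Finset.sum_congr rfl fun n _ => ?_))
    rw [smul_pow, smul_smul, smul_mulVec, mul_comm]
  rw [hsplit, exp_add_of_commute _ _ ((Commute.one_left B).smul_left _ |>.smul_right _),
    hexp_scalar, smul_mul_assoc, one_mul, smul_mulVec, hexp_nil, Finset.smul_sum]
  simp only [smul_smul, mul_assoc]

theorem tendsto_exp_smul_mulVec_atTop {N : Matrix ι ι ℂ} (hN : ∀ μ ∈ spectrum ℂ N, μ.re < 0)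
    (w : ι → ℂ) : Tendsto (fun t : ℝ => exp (t • N) *ᵥ w) atTop (𝓝 0) := by
  set f : Module.End ℂ (ι → ℂ) := toLinAlgEquiv' N
  have hw : w ∈ ⨆ μ, f.maxGenEigenspace μ := by
    simp [Module.End.iSup_maxGenEigenspace_eq_top]
  refine Submodule.iSup_induction
    (motive := fun w => Tendsto (fun t : ℝ => exp (t • N) *ᵥ w) atTop (𝓝 0))
    _ hw (fun μ w hw => ?_) (by simp) (fun v w hv hw => by simpa [mulVec_add] using hv.add hw)
  rcases eq_or_ne w 0 with rfl | hw0
  · simp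
  have hμ : μ.re < 0 := by
    have : f.HasEigenvalue μ :=
      Module.End.HasUnifEigenvalue.lt zero_lt_one ((Submodule.ne_bot_iff _).mpr ⟨w, hw, hw0⟩)
    exact hN μ (AlgEquiv.spectrum_eq toLinAlgEquiv' N ▸ this.mem_spectrum)
  obtain ⟨k, hk⟩ := (Module.End.mem_maxGenEigenspace _ _ _).mp hw
  have hk' : (N - μ • 1) ^ k *ᵥ w = 0 := by
    have hpow : toLinAlgEquiv' ((N - μ • 1) ^ k) = (f - μ • 1) ^ k := by
      simp [f, map_pow, map_sub]
    rw [← toLinAlgEquiv'_apply, hpow, hk]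
  simp_rw [← Complex.coe_smul, exp_smul_mulVec_eq_sum hk']
  simpa using tendsto_finsetSum (Finset.range k) fun n _ =>
    (Complex.tendsto_exp_mul_mul_pow_atTop hμ n).smul_const
      ((n.factorial : ℂ)⁻¹ • ((N - μ • 1) ^ n *ᵥ w))

end Matrix

section Hurwitz

variable {ι κ : Type*} [Fintype ι] [DecidableEq ι] [Fintype κ] [DecidableEq κ]

theorem IsHurwitz.fromBlocks_zero₂₁ {A : Matrix ι ι ℝ} {D : Matrix κ κ ℝ} (hA : IsHurwitz A)
    (hD : IsHurwitz D) (B : Matrix ι κ ℝ) : IsHurwitz (fromBlocks A B 0 D) := by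
  intro μ hμ
  rw [mem_spectrum_iff_isRoot_charpoly, fromBlocks_map, Matrix.map_zero _ (map_zero _),
    charpoly_fromBlocks_zero₂₁, Polynomial.IsRoot, Polynomial.eval_mul, mul_eq_zero] at hμ
  rcases hμ with hμ | hμ
  exacts [hA μ (mem_spectrum_iff_isRoot_charpoly.mpr hμ),
    hD μ (mem_spectrum_iff_isRoot_charpoly.mpr hμ)]

theorem IsHurwitz.tendsto_zero_of_hasDerivAt {M : Matrix ι ι ℝ} (hM : IsHurwitz M)
    {x : ℝ → ι → ℝ} (hx : ∀ t, 0 ≤ t → HasDerivAt x (M *ᵥ x t) t) :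
    Tendsto x atTop (𝓝 0) := by
  set φ : Matrix ι ι ℝ →+* Matrix ι ι ℂ := (algebraMap ℝ ℂ).mapMatrix
  have hφ : Continuous φ := continuous_id.matrix_map Complex.continuous_ofReal
  have hxC : ∀ t, 0 ≤ t →
      (fun i => (x t i : ℂ)) = exp (t • M.map (algebraMap ℝ ℂ)) *ᵥ fun i => (x 0 i : ℂ) := by
    intro t ht
    ext i
    rw [eq_exp_smul_mulVec_of_hasDerivAt hx ht]
    have hφexp : φ (exp (t • M)) = exp (t • M.map (algebraMap ℝ ℂ)) := by
      refine (map_exp φ hφ _).trans (congrArg exp ?_)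
      ext i j
      simp [φ]
    exact hφexp ▸ RingHom.map_mulVec (algebraMap ℝ ℂ) _ _ i
  have hre : Continuous fun v : ι → ℂ => fun i => (v i).re :=
    continuous_pi fun i => Complex.continuous_re.comp (continuous_apply i)
  refine ((hre.tendsto 0).comp
    (tendsto_exp_smul_mulVec_atTop hM fun i => (x 0 i : ℂ))).congr' ?_
  filter_upwards [eventually_ge_atTop 0] with t ht
  rw [Function.comp_apply, ← hxC t ht]
  simp

theorem IsHurwitz.tendsto_zero_of_cascade {K : Matrix ι ι ℝ} {L : Matrix κ κ ℝ}
    (hK : IsHurwitz K) (hL : IsHurwitz L) (C : Matrix ι κ ℝ) {x : ℝ → ι → ℝ} {e : ℝ → κ → ℝ}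
    (hx : ∀ t, 0 ≤ t → HasDerivAt x (K *ᵥ x t + C *ᵥ e t) t)
    (he : ∀ t, 0 ≤ t → HasDerivAt e (L *ᵥ e t) t) :
    Tendsto x atTop (𝓝 0) ∧ Tendsto e atTop (𝓝 0) := by
  have hz : ∀ t, 0 ≤ t → HasDerivAt (fun s => Sum.elim (x s) (e s))
      (fromBlocks K C 0 L *ᵥ Sum.elim (x t) (e t)) t := by
    intro t ht
    rw [fromBlocks_mulVec, hasDerivAt_pi]
    rintro (i | j)
    · simpa using hasDerivAt_pi.mp (hx t ht) i
    · simpa using hasDerivAt_pi.mp (he t ht) j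
  have hlim := tendsto_pi_nhds.mp ((hK.fromBlocks_zero₂₁ hL C).tendsto_zero_of_hasDerivAt hz)
  exact ⟨tendsto_pi_nhds.mpr fun i => hlim (.inl i), tendsto_pi_nhds.mpr fun j => hlim (.inr j)⟩

end Hurwitz

theorem HasDerivAt.finSnoc {n : ℕ} {f : ℝ → Fin n → ℝ} {g : ℝ → ℝ} {f' : Fin n → ℝ} {g' t : ℝ}
    (hf : HasDerivAt f f' t) (hg : HasDerivAt g g' t) :
    HasDerivAt (fun s => (Fin.snoc (f s) (g s) : Fin (n + 1) → ℝ)) (Fin.snoc f' g') t := by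
  rw [hasDerivAt_pi] at hf ⊢
  refine Fin.lastCases ?_ (fun i => ?_)
  · simpa using hg
  · simpa using hf i

theorem Fin.snoc_dotProduct_snoc {n : ℕ} (a x : Fin n → ℝ) (b y : ℝ) :
    (Fin.snoc a b : Fin (n + 1) → ℝ) ⬝ᵥ Fin.snoc x y = a ⬝ᵥ x + b * y := by
  simp [dotProduct, Fin.sum_univ_castSucc]

theorem Fin.snoc_single_zero {n : ℕ} (i : Fin n) (a : ℝ) :
    (Fin.snoc (Pi.single i a) 0 : Fin (n + 1) → ℝ) = Pi.single i.castSucc a := by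
  ext j
  refine Fin.lastCases ?_ (fun k => ?_) j <;> simp [Pi.single_apply]

theorem shiftMatrix_mulVec_snoc_zero (n : ℕ) (x : Fin (n + 1) → ℝ) :
    shiftMatrix (n + 2) *ᵥ Fin.snoc x 0 = Fin.snoc (shiftMatrix (n + 1) *ᵥ x) 0 := by
  ext j
  refine Fin.lastCases ?_ (fun i => ?_) j
  · simp only [Fin.snoc_last, mulVec, dotProduct]
    refine Finset.sum_eq_zero fun k _ => ?_
    rw [shiftMatrix, of_apply, if_neg (by rw [Fin.val_last]; omega), zero_mul]
  · simp [shiftMatrix, mulVec, dotProduct, Fin.sum_univ_castSucc]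

theorem snoc_zero_shiftMatrix_mulVec_add_smul (n : ℕ) (x w : Fin (n + 1) → ℝ) (c : ℝ) :
    (Fin.snoc (shiftMatrix (n + 1) *ᵥ x + c • w) 0 : Fin (n + 2) → ℝ) =
      shiftMatrix (n + 2) *ᵥ Fin.snoc x 0 + c • Fin.snoc w 0 := by
  rw [shiftMatrix_mulVec_snoc_zero]
  ext j
  refine Fin.lastCases ?_ (fun i => ?_) j <;> simp

theorem badrc_closed_loop_stable_general (m : ℕ) (bn : ℝ)
    (kbar : Fin (m + 1) → ℝ) (l : Fin (m + 2) → ℝ)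
    (hK : IsHurwitz (shiftMatrix (m + 1) -
      Matrix.vecMulVec (bn • (Pi.single (Fin.last m) 1 : Fin (m + 1) → ℝ)) kbar))
    (hL : IsHurwitz (shiftMatrix (m + 2) -
      Matrix.vecMulVec l (Pi.single 0 1 : Fin (m + 2) → ℝ)))
    (xbar : ℝ → Fin (m + 1) → ℝ) (v : ℝ → Fin (m + 2) → ℝ)
    (hx : ∀ t : ℝ, 0 ≤ t → HasDerivAt xbar
      ((shiftMatrix (m + 1)).mulVec (xbar t) +
        (-(Fin.snoc kbar (1 : ℝ) ⬝ᵥ v t)) •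
          (bn • (Pi.single (Fin.last m) 1 : Fin (m + 1) → ℝ))) t)
    (hv : ∀ t : ℝ, 0 ≤ t → HasDerivAt v
      ((shiftMatrix (m + 2)).mulVec (v t) +
        (-(Fin.snoc kbar (1 : ℝ) ⬝ᵥ v t)) •
          (bn • (Pi.single (Fin.castSucc (Fin.last m)) 1 : Fin (m + 2) → ℝ)) +
        (xbar t 0 - v t 0) • l) t) :
    Filter.Tendsto xbar Filter.atTop (nhds 0) ∧
      Filter.Tendsto v Filter.atTop (nhds 0) := by
  set b : Fin (m + 1) → ℝ := bn • Pi.single (Fin.last m) 1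
  set k : Fin (m + 2) → ℝ := Fin.snoc kbar 1
  set e : ℝ → Fin (m + 2) → ℝ := fun t => Fin.snoc (xbar t) 0 - v t
  have hx' : ∀ t, 0 ≤ t → HasDerivAt xbar
      ((shiftMatrix (m + 1) - vecMulVec b kbar) *ᵥ xbar t + vecMulVec b k *ᵥ e t) t := by
    intro t ht
    refine (hx t ht).congr_deriv ?_
    simp only [e, sub_mulVec, vecMulVec_mulVec, dotProduct_sub, k, Fin.snoc_dotProduct_snoc,
      mul_zero, add_zero, op_smul_eq_smul]
    module
  have he : ∀ t, 0 ≤ t → HasDerivAt e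
      ((shiftMatrix (m + 2) - vecMulVec l (Pi.single 0 1)) *ᵥ e t) t := by
    intro t ht
    refine (((hx t ht).finSnoc (hasDerivAt_const t 0)).sub (hv t ht)).congr_deriv ?_
    rw [snoc_zero_shiftMatrix_mulVec_add_smul]
    simp only [b, ← Pi.single_smul, Fin.snoc_single_zero, e, sub_mulVec, vecMulVec_mulVec,
      mulVec_sub, single_one_dotProduct, op_smul_eq_smul, Fin.snoc_apply_zero]
    module
  obtain ⟨hxbar, herr⟩ := hK.tendsto_zero_of_cascade hL (vecMulVec b k) hx' he
  refine ⟨hxbar, ?_⟩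
  have hpad : Tendsto (fun t => (Fin.snoc (xbar t) 0 : Fin (m + 2) → ℝ)) atTop (𝓝 0) := by
    have := hxbar.finSnoc (A := fun _ => ℝ) (tendsto_const_nhds (x := (0 : ℝ)))
    rwa [show (Fin.snoc (0 : Fin (m + 1) → ℝ) 0 : Fin (m + 2) → ℝ) = 0 from
      Fin.snoc_init_self 0] at this
  simpa [e] using hpad.sub herr

/-- **BADRC closed-loop asymptotic stability (paper's Theorem, `f ≡ 0`, `ω₂ ≡ 0`).**
The plant `x̄' = Ā·x̄ + b̄·u` (integrator chain of dimension `n = m+1`, output `x̄₁`),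
the extended state observer `v' = A·v + b·u + l·(x̄₁ − v₁)` of dimension `n+1`, and the
feedback `u = −kᵀ·v` with `k = (k̄, 1)` yield `x̄(t) → 0` and `v(t) → 0` as `t → ∞`,
provided `Ā − b̄·k̄ᵀ` and `A − l·c` are Hurwitz (`c = e₁ᵀ`). -/
theorem badrc_closed_loop_stable (m : ℕ) (bn : ℝ) (hbn : bn ≠ 0)
    (kbar : Fin (m + 1) → ℝ) (l : Fin (m + 2) → ℝ)
    (hK : IsHurwitz (shiftMatrix (m + 1) -
      Matrix.vecMulVec (bn • (Pi.single (Fin.last m) 1 : Fin (m + 1) → ℝ)) kbar))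
    (hL : IsHurwitz (shiftMatrix (m + 2) -
      Matrix.vecMulVec l (Pi.single 0 1 : Fin (m + 2) → ℝ)))
    (xbar : ℝ → Fin (m + 1) → ℝ) (v : ℝ → Fin (m + 2) → ℝ)
    (hx : ∀ t : ℝ, 0 ≤ t → HasDerivAt xbar
      ((shiftMatrix (m + 1)).mulVec (xbar t) +
        (-(Fin.snoc kbar (1 : ℝ) ⬝ᵥ v t)) •
          (bn • (Pi.single (Fin.last m) 1 : Fin (m + 1) → ℝ))) t)
    (hv : ∀ t : ℝ, 0 ≤ t → HasDerivAt v
      ((shiftMatrix (m + 2)).mulVec (v t) +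
        (-(Fin.snoc kbar (1 : ℝ) ⬝ᵥ v t)) •
          (bn • (Pi.single (Fin.castSucc (Fin.last m)) 1 : Fin (m + 2) → ℝ)) +
        (xbar t 0 - v t 0) • l) t) :
    Filter.Tendsto xbar Filter.atTop (nhds 0) ∧
      Filter.Tendsto v Filter.atTop (nhds 0) :=
  badrc_closed_loop_stable_general m bn kbar l hK hL xbar v hx hv
end
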